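/- arXiv:1610.09230 — 4 statements merged into one kernel-verified Lean document; each statement's English description precedes it below -/
import Mathlib

section
/- Let (Ω, F, P) be a probability space and Ψ : Ω × ℝ^d → ℝ ∪ {-∞} such that Ψ(ω, ·) is concave for every ω, Ψ(ω, x) ≤ C for a uniform constant C, Ψ is jointly measurable, and there exists h° ∈ ℝ^d with E^P[Ψ(h°)] > -∞. Define Φ(h) := E^P[Ψ(h)]. Then Φ^∞(h) = E^P[Ψ^∞(h)] for all h ∈ ℝ^d (with values in ℝ ∪ {-∞}), where Ψ^∞(ω, ·) denotes the horizon function of Ψ(ω, ·). -/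
open MeasureTheory Filter
open scoped ENNReal

/-- Concavity for extended-real-valued functions (values in `ℝ ∪ {-∞} ⊆ EReal`). -/
def IsConcaveE {E : Type*} [AddCommGroup E] [Module ℝ E] (f : E → EReal) : Prop :=
  ∀ x y : E, ∀ a b : ℝ, 0 ≤ a → 0 ≤ b → a + b = 1 →
    (a : EReal) * f x + (b : EReal) * f y ≤ f (a • x + b • y)

/-- Horizon (recession) function of `f` with base point `x`:
`f^∞(h) = inf_{n ∈ ℕ+} (1/n) (f (x + n h) - f x)`. -/
noncomputable def hor {E : Type*} [AddCommGroup E] [Module ℝ E]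
    (f : E → EReal) (x h : E) : EReal :=
  ⨅ n : ℕ+, ((n : ℝ)⁻¹ : EReal) * (f (x + (n : ℝ) • h) - f x)

/-- The canonical map `EReal → ℝ≥0∞` (sending `⊤` to `⊤` and negatives to `0`). -/
noncomputable def erealToENNReal (x : EReal) : ℝ≥0∞ :=
  if x = ⊤ then ⊤ else ENNReal.ofReal x.toReal

/-- Expectation of a function `g : Ω → ℝ ∪ {-∞}` bounded above by the constant `C`,
with values in `ℝ ∪ {-∞} ⊆ EReal`: `E[g] = C - ∫⁻ (C - g)`. -/
noncomputable def expE {Ω : Type*} [MeasurableSpace Ω] (P : Measure Ω) (C : ℝ)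
    (g : Ω → EReal) : EReal :=
  (C : EReal) - ENNReal.toEReal (∫⁻ ω, erealToENNReal ((C : EReal) - g ω) ∂P)

/-
Write `L = (C - f)⁺` for the gap of a concave `f ≤ C` below its bound and
`Q n = (f (x + n • h) - f x) / n`, so that `f^∞(h) = ⨅ n, Q n`. Since `Q n ≤ (C - f x) / n`, we get
`f^∞ ≤ 0` and `(C - f x) - Q n ≥ 0`; in fact `(C - f x) - Q n = L (x + n • h) / n + (1 - 1/n) L x`,
the chord of `L` through `x` and `x + n • h` evaluated at `x + h`. This expression is affine in `L`,
hence commutes with `∫⁻`, and is nondecreasing in `n` by concavity, so monotone convergence turns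
`(C - Φ h₀) - Φ^∞(h)` into `∫⁻ ((C - Ψ h₀) - Ψ^∞(h))`. The finite term `C - Φ h₀ = ∫⁻ (C - Ψ h₀)`
then cancels.
-/

open Topology

lemma EReal.continuous_coe_sub (a : ℝ) : Continuous fun y : EReal => (a : EReal) - y :=
  continuous_iff_continuousAt.2 fun y =>
    (EReal.continuousAt_add (p := ((a : EReal), -y)) (.inl (EReal.coe_ne_top a))
      (.inl (EReal.coe_ne_bot a))).comp (f := fun z => ((a : EReal), -z)) (x := y) (by fun_prop)

lemma EReal.toENNReal_coe_sub_iInf {ι : Sort*} (a : ℝ) (q : ι → EReal) :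
    ((a : EReal) - ⨅ i, q i).toENNReal = ⨆ i, ((a : EReal) - q i).toENNReal :=
  Antitone.map_iInf_of_continuousAt
    (EReal.continuous_toENNReal.comp (EReal.continuous_coe_sub a)).continuousAt
    (fun _ _ hxy => EReal.toENNReal_le_toENNReal (EReal.sub_le_sub le_rfl hxy)) (by simp)

lemma EReal.coe_sub_coe_sub (c : ℝ) (x : EReal) : (c : EReal) - (c - x) = x := by
  induction x using EReal.rec with
  | bot => rw [EReal.coe_sub_bot, EReal.sub_top]
  | coe x => rw [← EReal.coe_sub, ← EReal.coe_sub, sub_sub_cancel]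
  | top => rw [EReal.sub_top, EReal.coe_sub_bot]

lemma EReal.zero_sub_toENNReal_zero_sub {x : EReal} (hx : x ≤ 0) :
    (0 : EReal) - ((0 - x).toENNReal : EReal) = x := by
  rw [EReal.coe_toENNReal (by rwa [zero_sub, EReal.neg_nonneg]), zero_sub, zero_sub, neg_neg]

noncomputable section

variable {E : Type*} [AddCommGroup E] [Module ℝ E]

def diffQuot (f : E → EReal) (x h : E) (n : ℕ+) : EReal :=
  ((n : ℝ)⁻¹ : EReal) * (f (x + (n : ℝ) • h) - f x)

def gap {α : Type*} (C : ℝ) (f : α → EReal) (z : α) : ℝ≥0∞ :=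
  ((C : EReal) - f z).toENNReal

def chord (L : E → ℝ≥0∞) (x h : E) (n : ℕ+) : ℝ≥0∞ :=
  ((n : ℕ) : ℝ≥0∞)⁻¹ * L (x + (n : ℝ) • h) + (1 - ((n : ℕ) : ℝ≥0∞)⁻¹) * L x

lemma hor_eq_iInf_diffQuot (f : E → EReal) (x h : E) : hor f x h = ⨅ n, diffQuot f x h n := rfl

lemma diffQuot_le {f : E → EReal} {C : ℝ} (hC : ∀ z, f z ≤ C) {x : E} {r : ℝ}
    (hx : f x = r) (h : E) (n : ℕ+) :
    diffQuot f x h n ≤ (((n : ℝ)⁻¹ * (C - r) : ℝ) : EReal) := by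
  rw [EReal.coe_mul, EReal.coe_inv, EReal.coe_sub, ← hx]
  exact mul_le_mul_of_nonneg_left (EReal.sub_le_sub (hC _) le_rfl)
    (by rw [← EReal.coe_inv]; exact EReal.coe_nonneg.2 (by positivity))

lemma hor_nonpos {f : E → EReal} {C : ℝ} (hC : ∀ z, f z ≤ C) {x : E} (hx : f x ≠ ⊥) (h : E) :
    hor f x h ≤ 0 := by
  obtain ⟨r, hx⟩ : ∃ r : ℝ, f x = r :=
    ⟨_, (EReal.coe_toReal (ne_top_of_le_ne_top (EReal.coe_ne_top C) (hC x)) hx).symm⟩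
  have hlim : Tendsto (fun k : ℕ => (((k.succPNat : ℝ)⁻¹ * (C - r) : ℝ) : EReal))
      atTop (𝓝 ((0 : ℝ) : EReal)) := by
    refine EReal.tendsto_coe.2 ?_
    simpa [one_div] using tendsto_one_div_add_atTop_nhds_zero_nat.mul_const (C - r)
  exact ge_of_tendsto' hlim fun k : ℕ => (iInf_le _ _).trans (diffQuot_le hC hx h k.succPNat)

lemma IsConcaveE.antitone_diffQuot {f : E → EReal} (hf : IsConcaveE f) {x : E} {r : ℝ}
    (hx : f x = r) (h : E) : Antitone (diffQuot f x h) := by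
  intro a b hab
  have ha : (0 : ℝ) < a := by exact_mod_cast a.pos
  have hb : (0 : ℝ) < b := by exact_mod_cast b.pos
  have hab : (a : ℝ) ≤ b := by exact_mod_cast hab
  have ht : 0 < (a : ℝ) / b := by positivity
  have hconc := hf (x + (b : ℝ) • h) x ((a : ℝ) / b) (1 - (a : ℝ) / b) ht.le
    (sub_nonneg.2 (div_le_one_of_le₀ hab hb.le)) (by ring)
  have hpt : ((a : ℝ) / b) • (x + (b : ℝ) • h) + (1 - (a : ℝ) / b) • x = x + (a : ℝ) • h := by
    rw [smul_add, smul_smul, div_mul_cancel₀ _ hb.ne']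
    module
  rw [hpt, hx] at hconc
  simp only [diffQuot, hx, ← EReal.coe_inv]
  generalize f (x + (b : ℝ) • h) = v at hconc ⊢
  generalize f (x + (a : ℝ) • h) = u at hconc ⊢
  induction v using EReal.rec with
  | bot => simp [EReal.coe_mul_bot_of_pos (inv_pos.2 hb)]
  | top =>
    rw [EReal.coe_mul_top_of_pos ht, ← EReal.coe_mul, EReal.top_add_coe] at hconc
    simp [top_le_iff.1 hconc, EReal.coe_mul_top_of_pos (inv_pos.2 ha)]
  | coe s =>
    induction u using EReal.rec with
    | bot =>
      rw [← EReal.coe_mul, ← EReal.coe_mul, ← EReal.coe_add] at hconc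
      exact absurd (le_bot_iff.1 hconc) (EReal.coe_ne_bot _)
    | top => simp [EReal.coe_mul_top_of_pos (inv_pos.2 ha)]
    | coe u =>
      have hconc : (a : ℝ) / b * s + (1 - (a : ℝ) / b) * r ≤ u := by exact_mod_cast hconc
      rw [← EReal.coe_sub, ← EReal.coe_sub, ← EReal.coe_mul, ← EReal.coe_mul, EReal.coe_le_coe_iff]
      calc (b : ℝ)⁻¹ * (s - r) = (a : ℝ)⁻¹ * ((a : ℝ) / b * s + (1 - (a : ℝ) / b) * r - r) := by
            field_simp; ring
        _ ≤ (a : ℝ)⁻¹ * (u - r) := by gcongr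

lemma chord_eq_top {L : E → ℝ≥0∞} {x : E} (hx : L x = ⊤) (h : E) {n : ℕ+} (hn : 1 < n) :
    chord L x h n = ⊤ := by
  have : (1 : ℝ≥0∞) - ((n : ℕ) : ℝ≥0∞)⁻¹ ≠ 0 :=
    (tsub_pos_iff_lt.2 (ENNReal.inv_lt_one.2 (by exact_mod_cast hn))).ne'
  simp [chord, hx, this]

lemma monotone_chord_of_eq_top {L : E → ℝ≥0∞} {x : E} (hx : L x = ⊤) (h : E) :
    Monotone (chord L x h) := by
  intro m n hmn
  rcases (one_le : (1 : ℕ+) ≤ n).eq_or_lt with rfl | hn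
  · rw [le_antisymm hmn (one_le : (1 : ℕ+) ≤ m)]
  · exact (chord_eq_top hx h hn).symm ▸ le_top

lemma toENNReal_sub_diffQuot {f : E → EReal} {C : ℝ} (hC : ∀ z, f z ≤ C) {x : E} {r : ℝ}
    (hx : f x = r) (h : E) (n : ℕ+) :
    ((C : EReal) - r - diffQuot f x h n).toENNReal = chord (gap C f) x h n := by
  have hn : (0 : ℝ) < n := by exact_mod_cast n.pos
  have hn1 : (n : ℝ)⁻¹ ≤ 1 := inv_le_one_of_one_le₀ (by exact_mod_cast (one_le : 1 ≤ n))
  have hinv : ((n : ℕ) : ℝ≥0∞)⁻¹ = ENNReal.ofReal (n : ℝ)⁻¹ := by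
    rw [ENNReal.ofReal_inv_of_pos hn, ENNReal.ofReal_natCast]
  simp only [diffQuot, chord, gap, hx, ← EReal.coe_inv]
  have hv := hC (x + (n : ℝ) • h)
  generalize f (x + (n : ℝ) • h) = v at hv ⊢
  induction v using EReal.rec with
  | bot =>
    rw [EReal.bot_sub, EReal.coe_mul_bot_of_pos (by positivity), ← EReal.coe_sub, EReal.coe_sub_bot,
      EReal.coe_sub_bot, EReal.toENNReal_top, ENNReal.mul_top (by simp), top_add]
  | coe s =>
    have hs : s ≤ C := EReal.coe_le_coe_iff.1 hv
    have hr : r ≤ C := EReal.coe_le_coe_iff.1 (hx ▸ hC x)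
    simp only [← EReal.coe_sub, ← EReal.coe_mul, EReal.real_coe_toENNReal, hinv]
    rw [← ENNReal.ofReal_one, ← ENNReal.ofReal_sub _ (by positivity),
      ← ENNReal.ofReal_mul (by positivity), ← ENNReal.ofReal_mul (by linarith),
      ← ENNReal.ofReal_add (by nlinarith [inv_pos.2 hn]) (by nlinarith)]
    congr 1
    ring
  | top => exact absurd hv (by simp)

lemma IsConcaveE.monotone_chord_gap {f : E → EReal} (hf : IsConcaveE f) {C : ℝ}
    (hC : ∀ z, f z ≤ C) (x h : E) : Monotone (chord (gap C f) x h) := by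
  cases hfx : f x using EReal.rec with
  | bot => exact monotone_chord_of_eq_top (by simp [gap, hfx]) h
  | coe r =>
    intro m n hmn
    rw [← toENNReal_sub_diffQuot hC hfx, ← toENNReal_sub_diffQuot hC hfx]
    exact EReal.toENNReal_le_toENNReal (EReal.sub_le_sub le_rfl (hf.antitone_diffQuot hfx h hmn))
  | top => exact absurd (hfx ▸ hC x) (by simp)

lemma toENNReal_zero_sub_hor_add_gap {f : E → EReal} {C : ℝ} (hC : ∀ z, f z ≤ C) (x h : E) :
    ((0 : EReal) - hor f x h).toENNReal + gap C f x = ⨆ n, chord (gap C f) x h n := by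
  cases hfx : f x using EReal.rec with
  | bot =>
    have hgap : gap C f x = ⊤ := by simp [gap, hfx]
    rw [hgap, add_top]
    exact (top_unique (le_iSup_of_le 2 (chord_eq_top hgap h (by decide)).ge)).symm
  | coe r =>
    have hr : (0 : EReal) ≤ ((C - r : ℝ) : EReal) :=
      EReal.coe_nonneg.2 (sub_nonneg.2 (EReal.coe_le_coe_iff.1 (hfx ▸ hC x)))
    have hhor : (0 : EReal) ≤ 0 - hor f x h := by
      rw [zero_sub, EReal.neg_nonneg]; exact hor_nonpos hC (hfx ▸ EReal.coe_ne_bot r) h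
    calc ((0 : EReal) - hor f x h).toENNReal + gap C f x
        = (((C - r : ℝ) : EReal) + (0 - hor f x h)).toENNReal := by
          rw [EReal.toENNReal_add hr hhor, add_comm, gap, hfx, EReal.coe_sub]
      _ = (((C - r : ℝ) : EReal) - ⨅ n, diffQuot f x h n).toENNReal := by
          rw [zero_sub, ← sub_eq_add_neg, hor_eq_iInf_diffQuot]
      _ = ⨆ n, chord (gap C f) x h n := by
          simp_rw [EReal.toENNReal_coe_sub_iInf, EReal.coe_sub, toENNReal_sub_diffQuot hC hfx]
  | top => exact absurd (hfx ▸ hC x) (by simp)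

lemma lintegral_iSup_chord {Ω : Type*} [MeasurableSpace Ω] (μ : Measure Ω) {L : Ω → E → ℝ≥0∞}
    (hL : ∀ z, Measurable fun ω => L ω z) {x h : E} (hmono : ∀ ω, Monotone (chord (L ω) x h)) :
    ∫⁻ ω, ⨆ n, chord (L ω) x h n ∂μ = ⨆ n, chord (fun z => ∫⁻ ω, L ω z ∂μ) x h n := by
  have hchord : ∀ n, Measurable fun ω => chord (L ω) x h n :=
    fun n => ((hL _).const_mul _).add ((hL _).const_mul _)
  rw [lintegral_iSup_directed (fun n => (hchord n).aemeasurable)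
    (Monotone.directed_le fun m n hmn ω => hmono ω hmn)]
  congr 1 with n
  simp only [chord]
  rw [lintegral_add_left ((hL _).const_mul _), lintegral_const_mul _ (hL _),
    lintegral_const_mul _ (hL _)]

end

section
variable {Ω : Type*} [MeasurableSpace Ω] (P : Measure Ω) (C : ℝ) (g : Ω → EReal)

-- `erealToENNReal` unfolds to `EReal.toENNReal`.
lemma expE_eq_sub_lintegral_gap : expE P C g = C - ↑(∫⁻ ω, gap C g ω ∂P) := rfl

lemma expE_le : expE P C g ≤ C := by
  rw [expE_eq_sub_lintegral_gap]
  simpa using EReal.sub_le_sub (le_refl (C : EReal)) (EReal.coe_ennreal_nonneg (∫⁻ ω, gap C g ω ∂P))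

lemma toENNReal_coe_sub_expE : ((C : EReal) - expE P C g).toENNReal = ∫⁻ ω, gap C g ω ∂P := by
  rw [expE_eq_sub_lintegral_gap, EReal.coe_sub_coe_sub, EReal.toENNReal_coe]

variable {P C g} in
lemma lintegral_gap_ne_top (hg : expE P C g ≠ ⊥) : ∫⁻ ω, gap C g ω ∂P ≠ ⊤ := by
  intro htop
  rw [expE_eq_sub_lintegral_gap, htop, EReal.coe_ennreal_top, EReal.sub_top] at hg
  exact hg rfl
end

theorem stmt5_general {Ω : Type*} [MeasurableSpace Ω] (P : Measure Ω)
    {d : ℕ} (Ψ : Ω → (Fin d → ℝ) → EReal) (C : ℝ)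
    (hmeas : Measurable (Function.uncurry Ψ))
    (hconc : ∀ ω, IsConcaveE (Ψ ω))
    (hbd : ∀ ω z, Ψ ω z ≤ (C : EReal))
    (h₀ : Fin d → ℝ) (hh₀ : expE P C (fun ω => Ψ ω h₀) ≠ ⊥) :
    ∀ h : Fin d → ℝ,
      hor (fun z => expE P C (fun ω => Ψ ω z)) h₀ h
        = expE P 0 (fun ω => hor (Ψ ω) h₀ h) := by
  intro h
  set Φ := fun z => expE P C (fun ω => Ψ ω z)
  have hgap_meas : ∀ z, Measurable fun ω => gap C (Ψ ω) z := fun z =>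
    ((hmeas.comp (measurable_id.prodMk measurable_const)).const_sub _).ereal_toENNReal
  have hgap_Φ : gap C Φ = fun z => ∫⁻ ω, gap C (Ψ ω) z ∂P :=
    funext fun z => toENNReal_coe_sub_expE P C _
  have hΦ_le : ∀ z, Φ z ≤ C := fun z => expE_le P C _
  have hgap₀ : ∫⁻ ω, gap C (Ψ ω) h₀ ∂P ≠ ⊤ := lintegral_gap_ne_top hh₀
  have key : ((0 : EReal) - hor Φ h₀ h).toENNReal
      = ∫⁻ ω, ((0 : EReal) - hor (Ψ ω) h₀ h).toENNReal ∂P := by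
    rw [← ENNReal.add_left_inj hgap₀, ← lintegral_add_right _ (hgap_meas h₀)]
    have hΦ_sup := toENNReal_zero_sub_hor_add_gap hΦ_le h₀ h
    rw [hgap_Φ] at hΦ_sup
    simp_rw [hΦ_sup, toENNReal_zero_sub_hor_add_gap (hbd _)]
    exact (lintegral_iSup_chord P hgap_meas fun ω => (hconc ω).monotone_chord_gap (hbd ω) h₀ h).symm
  calc hor Φ h₀ h = 0 - (((0 : EReal) - hor Φ h₀ h).toENNReal : EReal) :=
        (EReal.zero_sub_toENNReal_zero_sub (hor_nonpos hΦ_le hh₀ h)).symm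
    _ = expE P 0 (fun ω => hor (Ψ ω) h₀ h) := by rw [key, expE_eq_sub_lintegral_gap]; rfl

/-- for `Φ(h) := E^P[Ψ(h)]` with `Ψ(ω,·)` concave, bounded above by `C`,
jointly measurable and `E^P[Ψ(h°)] > -∞`, one has `Φ^∞(h) = E^P[Ψ^∞(h)]`
(horizon functions taken with base point `h°`; `Ψ^∞ ≤ 0` is integrated with bound `0`). -/
theorem stmt5 {Ω : Type*} [MeasurableSpace Ω] (P : Measure Ω) [IsProbabilityMeasure P]
    {d : ℕ} (Ψ : Ω → (Fin d → ℝ) → EReal) (C : ℝ)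
    (hmeas : Measurable (Function.uncurry Ψ))
    (hconc : ∀ ω, IsConcaveE (Ψ ω))
    (hbd : ∀ ω z, Ψ ω z ≤ (C : EReal))
    (h₀ : Fin d → ℝ) (hh₀ : expE P C (fun ω => Ψ ω h₀) ≠ ⊥) :
    ∀ h : Fin d → ℝ,
      hor (fun z => expE P C (fun ω => Ψ ω z)) h₀ h
        = expE P 0 (fun ω => hor (Ψ ω) h₀ h) :=
  stmt5_general P Ψ C hmeas hconc hbd h₀ hh₀
end

section
/- Let f : ℝ^n → ℝ ∪ {-∞} be concave, upper-semicontinuous and proper, and suppose {z ∈ ℝ^n : f^∞(z) ≥ 0} is a linear subspace, and sup_x f(x) > -∞. Then there exists x̂ ∈ ℝ^n with f(x̂) = sup_{x ∈ ℝ^n} f(x), i.e. the supremum of f over ℝ^n is attained. -/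
/-!
Let `S = {z | f^∞(z) ≥ 0}`. For concave `f` this is the set of recession directions at `x₀`
of the closed convex superlevel set `{f ≥ f x₀}`. Recession directions of a closed convex set
do not depend on the base point; applied to the hypograph of `f` this gives
`f x ≤ f (x + z)` for all `x` and `z ∈ S`, so `sup f` is the supremum of `f` on a complement
`T` of `S`. On `T` the superlevel set `{f ≥ f x₀}` is bounded, since otherwise compactness of
the unit sphere yields a unit recession direction in `S ∩ T = 0`; being closed, it is
compact, and the upper semicontinuous `f` attains its maximum there.
-/

open MeasureTheory Filter
open scoped ENNReal

open Topology Bornology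

section Recession

variable {E : Type*} [AddCommGroup E] [Module ℝ E] [TopologicalSpace E]
  [IsTopologicalAddGroup E] [ContinuousSMul ℝ E] {C : Set E} {x₀ x d : E}

/-- `x + t d` is the limit, as `s → 0⁺`, of `(1 - s) x + s (x₀ + (t / s) d) ∈ C`. -/
theorem Convex.add_smul_mem_of_ray_subset (hC : Convex ℝ C) (hCc : IsClosed C)
    (hray : ∀ t : ℝ, 0 ≤ t → x₀ + t • d ∈ C) (hx : x ∈ C) {t : ℝ} (ht : 0 ≤ t) :
    x + t • d ∈ C := by
  have hlim : Tendsto (fun s : ℝ => x + s • (x₀ - x) + t • d) (𝓝[>] 0) (𝓝 (x + t • d)) := by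
    have hcont : Continuous fun s : ℝ => x + s • (x₀ - x) + t • d := by fun_prop
    simpa using (hcont.tendsto 0).mono_left nhdsWithin_le_nhds
  refine hCc.mem_of_tendsto hlim ?_
  filter_upwards [Ioc_mem_nhdsGT zero_lt_one] with s ⟨hs0, hs1⟩
  convert hC.add_smul_sub_mem hx (hray (t / s) (div_nonneg ht hs0.le)) ⟨hs0.le, hs1⟩ using 1
  rw [add_sub_right_comm, smul_add, smul_smul, mul_div_cancel₀ t hs0.ne', add_assoc]

end Recession

section NormedRecession

variable {E : Type*} [NormedAddCommGroup E] [NormedSpace ℝ E] {C : Set E} {x₀ d : E}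

theorem Convex.add_smul_mem_of_tendsto_dir {ι : Type*} {l : Filter ι} [l.NeBot]
    (hC : Convex ℝ C) (hCc : IsClosed C) (hx₀ : x₀ ∈ C) {y : ι → E} (hy : ∀ i, y i ∈ C)
    (hr : Tendsto (fun i => ‖y i - x₀‖) l atTop)
    (hd : Tendsto (fun i => ‖y i - x₀‖⁻¹ • (y i - x₀)) l (𝓝 d)) {t : ℝ} (ht : 0 ≤ t) :
    x₀ + t • d ∈ C := by
  refine hCc.mem_of_tendsto (tendsto_const_nhds.add (hd.const_smul t)) ?_
  filter_upwards [hr.eventually_ge_atTop t] with i hti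
  rw [smul_smul]
  exact hC.add_smul_sub_mem hx₀ (hy i)
    ⟨by positivity, mul_inv_le_one_of_le₀ hti (norm_nonneg _)⟩

theorem Convex.exists_norm_eq_one_ray_subset [FiniteDimensional ℝ E] (hC : Convex ℝ C)
    (hCc : IsClosed C) (hx₀ : x₀ ∈ C) (hunb : ¬IsBounded C) :
    ∃ d : E, ‖d‖ = 1 ∧ ∀ t : ℝ, 0 ≤ t → x₀ + t • d ∈ C := by
  have hfar : ∀ k : ℕ, ∃ y ∈ C, (k : ℝ) < ‖y - x₀‖ := by
    intro k
    by_contra! h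
    exact hunb ((Metric.isBounded_closedBall (x := x₀) (r := k)).subset
      fun y hy => by simpa [dist_eq_norm] using h y hy)
  choose y hyC hyr using hfar
  have hr : Tendsto (fun k => ‖y k - x₀‖) atTop atTop :=
    tendsto_atTop_mono (fun k => (hyr k).le) tendsto_natCast_atTop_atTop
  have hsphere : ∀ k, ‖y k - x₀‖⁻¹ • (y k - x₀) ∈ Metric.sphere (0 : E) 1 := fun k => by
    rw [mem_sphere_zero_iff_norm, norm_smul, norm_inv, norm_norm,
      inv_mul_cancel₀ ((Nat.cast_nonneg k).trans_lt (hyr k)).ne']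
  obtain ⟨d, hd, φ, hφ, hlim⟩ := (isCompact_sphere (0 : E) 1).tendsto_subseq hsphere
  exact ⟨d, mem_sphere_zero_iff_norm.1 hd, fun t ht =>
    hC.add_smul_mem_of_tendsto_dir hCc hx₀ (fun k => hyC (φ k))
      (hr.comp hφ.tendsto_atTop) hlim ht⟩

end NormedRecession

section Concave

variable {E : Type*} [AddCommGroup E] [Module ℝ E] {f : E → EReal} {x₀ z : E}

theorem IsConcaveE.convex_superlevel (hf : IsConcaveE f) (c : EReal) :
    Convex ℝ {x | c ≤ f x} := by
  intro x hx y hy a b ha hb hab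
  have ha' : (0 : EReal) ≤ a := EReal.coe_nonneg.2 ha
  have hb' : (0 : EReal) ≤ b := EReal.coe_nonneg.2 hb
  calc c = ((a + b : ℝ) : EReal) * c := by rw [hab, EReal.coe_one, one_mul]
    _ = a * c + b * c := by rw [EReal.coe_add, EReal.right_distrib_of_nonneg ha' hb']
    _ ≤ a * f x + b * f y :=
      add_le_add (mul_le_mul_of_nonneg_left hx ha') (mul_le_mul_of_nonneg_left hy hb')
    _ ≤ f (a • x + b • y) := hf x y a b ha hb hab

theorem IsConcaveE.convex_hypograph (hf : IsConcaveE f) :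
    Convex ℝ {p : E × ℝ | (p.2 : EReal) ≤ f p.1} := by
  rintro ⟨x, s⟩ hx ⟨y, s'⟩ hy a b ha hb hab
  have ha' : (0 : EReal) ≤ a := EReal.coe_nonneg.2 ha
  have hb' : (0 : EReal) ≤ b := EReal.coe_nonneg.2 hb
  calc ((a * s + b * s' : ℝ) : EReal) = a * s + b * s' := by
        rw [EReal.coe_add, EReal.coe_mul, EReal.coe_mul]
    _ ≤ a * f x + b * f y :=
      add_le_add (mul_le_mul_of_nonneg_left hx ha') (mul_le_mul_of_nonneg_left hy hb')
    _ ≤ f (a • x + b • y) := hf x y a b ha hb hab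

theorem hor_nonneg_iff_forall_pnat (h_top : f x₀ ≠ ⊤) (h_bot : f x₀ ≠ ⊥) :
    0 ≤ hor f x₀ z ↔ ∀ m : ℕ+, f x₀ ≤ f (x₀ + (m : ℝ) • z) := by
  simp only [hor, le_iInf_iff]
  refine forall_congr' fun m => ?_
  have hm : (0 : EReal) < ((m : ℝ) : EReal)⁻¹ :=
    EReal.inv_pos_of_pos_ne_top (EReal.coe_pos.2 (by positivity)) (EReal.coe_ne_top _)
  rw [EReal.mul_nonneg_iff, EReal.sub_nonneg (Or.inr h_top) (Or.inr h_bot)]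
  simp only [hm.le, not_le.2 hm, true_and, false_and, or_false]

theorem IsConcaveE.hor_nonneg_iff (hf : IsConcaveE f) (h_top : f x₀ ≠ ⊤) (h_bot : f x₀ ≠ ⊥) :
    0 ≤ hor f x₀ z ↔ ∀ t : ℝ, 0 ≤ t → f x₀ ≤ f (x₀ + t • z) := by
  rw [hor_nonneg_iff_forall_pnat h_top h_bot]
  refine ⟨fun h t ht => ?_, fun h m => h m (Nat.cast_nonneg _)⟩
  obtain ⟨m, hm⟩ : ∃ m : ℕ+, t ≤ m :=
    ⟨⌈t⌉₊.succPNat, by simpa using (Nat.le_ceil t).trans (by simp)⟩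
  have hm0 : (0 : ℝ) < m := by positivity
  have hseg := (hf.convex_superlevel (f x₀)).add_smul_sub_mem (le_refl (f x₀)) (h m)
    ⟨div_nonneg ht hm0.le, (div_le_one hm0).2 hm⟩
  rwa [add_sub_cancel_left, smul_smul, div_mul_cancel₀ t hm0.ne'] at hseg

theorem IsConcaveE.le_add_of_ray [TopologicalSpace E] [IsTopologicalAddGroup E]
    [ContinuousSMul ℝ E] (hf : IsConcaveE f) (husc : UpperSemicontinuous f) {a : ℝ}
    (hray : ∀ t : ℝ, 0 ≤ t → (a : EReal) ≤ f (x₀ + t • z)) {x : E} (hx : f x ≠ ⊤) :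
    f x ≤ f (x + z) := by
  by_cases hbot : f x = ⊥
  · simp [hbot]
  obtain ⟨b, hb⟩ : ∃ b : ℝ, f x = b := ⟨(f x).toReal, (EReal.coe_toReal hx hbot).symm⟩
  have hclosed : IsClosed {p : E × ℝ | (p.2 : EReal) ≤ f p.1} :=
    (upperSemicontinuous_iff_IsClosed_hypograph.1 husc).preimage
      (continuous_fst.prodMk (continuous_coe_real_ereal.comp continuous_snd))
  have hmem := hf.convex_hypograph.add_smul_mem_of_ray_subset hclosed
    (x₀ := (x₀, a)) (d := (z, 0)) (fun t ht => by simpa using hray t ht)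
    (x := (x, b)) (by simp [hb]) zero_le_one
  simpa [hb] using hmem

end Concave

theorem UpperSemicontinuousOn.exists_eq_iSup_of_isCompact {α β : Type*} [TopologicalSpace α]
    [CompleteLinearOrder β] {f : α → β} {T : Set α} {c : β}
    (hK : IsCompact (T ∩ {x | c ≤ f x})) (hne : (T ∩ {x | c ≤ f x}).Nonempty)
    (hf : UpperSemicontinuousOn f (T ∩ {x | c ≤ f x})) (hdom : ∀ y, ∃ t ∈ T, f y ≤ f t) :
    ∃ x, f x = ⨆ y, f y := by
  obtain ⟨x, ⟨-, hcx⟩, hmax⟩ := hf.exists_isMaxOn hne hK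
  refine ⟨x, le_antisymm (le_iSup f x) (iSup_le fun y => ?_)⟩
  obtain ⟨t, htT, hyt⟩ := hdom y
  refine hyt.trans ?_
  by_cases hct : c ≤ f t
  · exact hmax ⟨htT, hct⟩
  · exact (not_le.1 hct).le.trans hcx

theorem exists_mem_le_of_isCompl {R M β : Type*} [Ring R] [AddCommGroup M] [Module R M]
    [Preorder β] {f : M → β} {S T : Submodule R M} (hST : IsCompl S T)
    (hf : ∀ x, ∀ z ∈ S, f x ≤ f (x + z)) (y : M) : ∃ t ∈ T, f y ≤ f t := by
  have hy : y ∈ S ⊔ T := hST.sup_eq_top ▸ Submodule.mem_top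
  obtain ⟨s, hs, t, ht, rfl⟩ := Submodule.mem_sup.1 hy
  exact ⟨t, ht, by simpa using hf (s + t) (-s) (S.neg_mem hs)⟩

theorem stmt9_general {n : ℕ} (f : (Fin n → ℝ) → EReal)
    (hconc : IsConcaveE f) (husc : UpperSemicontinuous f) (hne_top : ∀ z, f z ≠ ⊤)
    (x₀ : Fin n → ℝ) (hx₀ : f x₀ ≠ ⊥)
    (hlin : ∃ S : Submodule ℝ (Fin n → ℝ),
      (S : Set (Fin n → ℝ)) = {z | 0 ≤ hor f x₀ z}) :
    ∃ xhat, f xhat = ⨆ x, f x := by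
  obtain ⟨S, hS⟩ := hlin
  set L := {x | f x₀ ≤ f x}
  have hL : Convex ℝ L := hconc.convex_superlevel _
  have hLc : IsClosed L := husc.isClosed_preimage _
  have hmemS : ∀ z, z ∈ S ↔ ∀ t : ℝ, 0 ≤ t → x₀ + t • z ∈ L := fun z => by
    rw [← SetLike.mem_coe, hS]; exact hconc.hor_nonneg_iff (hne_top x₀) hx₀
  have hmono : ∀ x, ∀ z ∈ S, f x ≤ f (x + z) := fun x z hz =>
    hconc.le_add_of_ray husc (a := (f x₀).toReal)
      (by rw [EReal.coe_toReal (hne_top x₀) hx₀]; exact (hmemS z).1 hz) (hne_top x)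
  obtain ⟨T, hST⟩ := S.exists_isCompl
  have hdom := exists_mem_le_of_isCompl hST hmono
  obtain ⟨t₀, ht₀T, ht₀⟩ := hdom x₀
  have hK : IsClosed ((T : Set _) ∩ L) := T.closed_of_finiteDimensional.inter hLc
  have hbdd : IsBounded ((T : Set _) ∩ L) := by
    by_contra hunb
    obtain ⟨d, hd1, hray⟩ :=
      (T.convex.inter hL).exists_norm_eq_one_ray_subset hK ⟨ht₀T, ht₀⟩ hunb
    have hdT : d ∈ T := by simpa using T.sub_mem (hray 1 zero_le_one).1 ht₀T
    have hdS : d ∈ S := (hmemS d).2 fun t ht =>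
      hL.add_smul_mem_of_ray_subset hLc (fun s hs => (hray s hs).2) (le_refl (f x₀)) ht
    simp [Submodule.disjoint_def.1 hST.disjoint d hdS hdT] at hd1
  exact (husc.upperSemicontinuousOn _).exists_eq_iSup_of_isCompact
    (Metric.isCompact_of_isClosed_isBounded hK hbdd) ⟨t₀, ht₀T, ht₀⟩ hdom

/-- if `f : ℝ^n → ℝ ∪ {-∞}` is concave, usc and proper,
`{z | f^∞(z) ≥ 0}` is a linear subspace and `sup f > -∞`, then the supremum of `f`
over `ℝ^n` is attained. -/
theorem stmt9 {n : ℕ} (f : (Fin n → ℝ) → EReal)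
    (hconc : IsConcaveE f) (husc : UpperSemicontinuous f) (hne_top : ∀ z, f z ≠ ⊤)
    (x₀ : Fin n → ℝ) (hx₀ : f x₀ ≠ ⊥)
    (hlin : ∃ S : Submodule ℝ (Fin n → ℝ),
      (S : Set (Fin n → ℝ)) = {z | 0 ≤ hor f x₀ z})
    (hsup : (⨆ x, f x) ≠ ⊥) :
    ∃ xhat, f xhat = ⨆ x, f x :=
  stmt9_general f hconc husc hne_top x₀ hx₀ hlin
end

section
/- Monotone no-arbitrage transfer: let U : ℝ → ℝ ∪ {-∞} be nondecreasing, concave, upper-semicontinuous and nonconstant, V : ℝ^n → ℝ concave and upper-semicontinuous, and Ψ = U ∘ V proper. If the set {h ∈ ℝ^n : V^∞(h) ≥ 0} is a linear subspace, then the set {h ∈ ℝ^n : Ψ^∞(h) ≥ 0} is also a linear subspace. -/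
/-!
Since `U` is nondecreasing, `V^∞(h) ≥ 0` implies `Ψ^∞(h) ≥ 0`. Conversely, if `V` decreases
somewhere along the ray `h₀ + ℝ₊ h`, concavity makes it tend to `-∞` along that ray, so it
drops below a level `z₀` with `U z₀ < U (V h₀)`; such a level exists because a concave
function with a finite global minimum is constant. Hence the sets `{h | V^∞(h) ≥ 0}` and
`{h | Ψ^∞(h) ≥ 0}` coincide.
-/

open MeasureTheory Filter
open scoped ENNReal

lemma EReal.coe_mul_nonneg_iff {c : ℝ} (hc : 0 < c) {a : EReal} :
    0 ≤ (c : EReal) * a ↔ 0 ≤ a := by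
  have : (0 : EReal) < c := by exact_mod_cast hc
  rw [EReal.mul_nonneg_iff]
  constructor
  · rintro (⟨-, h⟩ | ⟨h, -⟩)
    · exact h
    · exact absurd h this.not_ge
  · exact fun h => .inl ⟨this.le, h⟩

section

variable {E : Type*} [AddCommGroup E] [Module ℝ E]

lemma zero_le_hor_iff {f : E → EReal} {x : E} (hbot : f x ≠ ⊥) (htop : f x ≠ ⊤) (h : E) :
    0 ≤ hor f x h ↔ ∀ n : ℕ+, f x ≤ f (x + (n : ℝ) • h) := by
  refine le_iInf_iff.trans (forall_congr' fun n => ?_)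
  rw [← EReal.coe_inv, EReal.coe_mul_nonneg_iff (by positivity),
    EReal.sub_nonneg (.inr htop) (.inr hbot)]

lemma ConcaveOn.add_smul_sub_le {V : E → ℝ} (hV : ConcaveOn ℝ Set.univ V) (x y : E) {t : ℝ}
    (ht : 1 ≤ t) :
    V (x + t • y) - V x ≤ t * (V (x + y) - V x) := by
  have ht0 : 0 < t := by linarith
  have hcomb : t⁻¹ • (x + t • y) + (1 - t⁻¹) • x = x + y := by
    rw [smul_add, smul_smul, inv_mul_cancel₀ ht0.ne']
    module
  have hconc := hV.2 (Set.mem_univ (x + t • y)) (Set.mem_univ x) (inv_nonneg.2 ht0.le)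
    (sub_nonneg.2 (inv_le_one_of_one_le₀ ht)) (add_sub_cancel _ _)
  rw [hcomb, smul_eq_mul, smul_eq_mul] at hconc
  have := mul_le_mul_of_nonneg_left hconc ht0.le
  field_simp at this
  linarith

lemma ConcaveOn.exists_pnat_add_smul_le {V : E → ℝ} (hV : ConcaveOn ℝ Set.univ V) {x h : E}
    {m : ℕ+} (hm : V (x + (m : ℝ) • h) < V x) (z : ℝ) :
    ∃ n : ℕ+, V (x + (n : ℝ) • h) ≤ z := by
  set d := V (x + (m : ℝ) • h) - V x
  have hd : 0 < -d := by simp only [d]; linarith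
  obtain ⟨N, hN⟩ := exists_nat_gt ((V x - z) / -d)
  have hk : (N.succPNat : ℝ) = N + 1 := by simp
  refine ⟨N.succPNat * m, ?_⟩
  have hchord := hV.add_smul_sub_le x ((m : ℝ) • h) (t := N.succPNat) (by rw [hk]; linarith)
  rw [PNat.mul_coe, Nat.cast_mul, mul_smul]
  rw [div_lt_iff₀ hd] at hN
  rw [hk] at hchord ⊢
  nlinarith

lemma ConcaveOn.forall_pnat_le_comp_iff {V : E → ℝ} (hV : ConcaveOn ℝ Set.univ V)
    {U : ℝ → EReal} (hU : Monotone U) {x : E} (hx : ∃ z, U z < U (V x)) (h : E) :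
    (∀ n : ℕ+, U (V x) ≤ U (V (x + (n : ℝ) • h))) ↔
      ∀ n : ℕ+, V x ≤ V (x + (n : ℝ) • h) := by
  refine ⟨fun hUV m => ?_, fun hV' n => hU (hV' n)⟩
  by_contra! hm
  obtain ⟨z, hz⟩ := hx
  obtain ⟨n, hn⟩ := hV.exists_pnat_add_smul_le hm z
  exact (hUV n).not_gt ((hU hn).trans_lt hz)

end

lemma IsConcaveE.eq_of_forall_le {U : ℝ → EReal} (hU : IsConcaveE U)
    (hU_top : ∀ y, U y ≠ ⊤) {c : ℝ} (hc : U c ≠ ⊥) (hmin : ∀ z, U c ≤ U z) (b : ℝ) : U b = U c := by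
  have hfin : ∀ z, ∃ r : ℝ, U z = r := fun z =>
    ⟨_, (EReal.coe_toReal (hU_top z) (ne_bot_of_le_ne_bot hc (hmin z))).symm⟩
  obtain ⟨γ, hγ⟩ := hfin c
  obtain ⟨β, hβ⟩ := hfin b
  obtain ⟨ζ, hζ⟩ := hfin (2 * c - b)
  have hmid := hU (2 * c - b) b (1 / 2) (1 / 2) (by norm_num) (by norm_num) (by norm_num)
  have hlow := hmin (2 * c - b)
  rw [show (1 / 2 : ℝ) • (2 * c - b) + (1 / 2 : ℝ) • b = c by simp only [smul_eq_mul]; ring,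
    hγ, hβ, hζ] at hmid
  rw [hγ, hζ, EReal.coe_le_coe_iff] at hlow
  refine le_antisymm ?_ (hmin b)
  rw [hγ, hβ, EReal.coe_le_coe_iff]
  norm_cast at hmid
  linarith

lemma IsConcaveE.exists_lt {U : ℝ → EReal} (hU : IsConcaveE U) (hU_top : ∀ y, U y ≠ ⊤)
    (hU_nonconst : ∃ a b, U a ≠ U b) {c : ℝ} (hc : U c ≠ ⊥) : ∃ z, U z < U c := by
  by_contra! hmin
  obtain ⟨a, b, hab⟩ := hU_nonconst
  exact hab ((hU.eq_of_forall_le hU_top hc hmin a).trans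
    (hU.eq_of_forall_le hU_top hc hmin b).symm)

theorem stmt14_general {n : ℕ} (U : ℝ → EReal)
    (hUconc : IsConcaveE U) (hUmono : Monotone U)
    (hUnonconst : ∃ a b : ℝ, U a ≠ U b)
    (hUne_top : ∀ y, U y ≠ ⊤)
    (V : (Fin n → ℝ) → ℝ) (hVconc : ConcaveOn ℝ Set.univ V)
    (h₀ : Fin n → ℝ) (hprop : U (V h₀) ≠ ⊥)
    (hlin : ∃ S : Submodule ℝ (Fin n → ℝ),
      (S : Set (Fin n → ℝ)) = {h | 0 ≤ hor (fun z => ((V z : ℝ) : EReal)) h₀ h}) :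
    ∃ S : Submodule ℝ (Fin n → ℝ),
      (S : Set (Fin n → ℝ)) = {h | 0 ≤ hor (fun z => U (V z)) h₀ h} := by
  obtain ⟨S, hS⟩ := hlin
  refine ⟨S, hS.trans (Set.ext fun h => ?_)⟩
  rw [Set.mem_ofPred_eq, Set.mem_ofPred_eq,
    zero_le_hor_iff (f := fun z => (V z : EReal)) (EReal.coe_ne_bot _) (EReal.coe_ne_top _),
    zero_le_hor_iff (f := fun z => U (V z)) hprop (hUne_top _),
    hVconc.forall_pnat_le_comp_iff hUmono (hUconc.exists_lt hUne_top hUnonconst hprop)]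
  simp only [EReal.coe_le_coe_iff]

/-- monotone no-arbitrage transfer: if `{h | V^∞(h) ≥ 0}` is a linear
subspace, then so is `{h | Ψ^∞(h) ≥ 0}` for `Ψ = U ∘ V` proper. -/
theorem stmt14 {n : ℕ} (U : ℝ → EReal)
    (hUconc : IsConcaveE U) (hUmono : Monotone U)
    (hUnonconst : ∃ a b : ℝ, U a ≠ U b)
    (hUusc : UpperSemicontinuous U) (hUne_top : ∀ y, U y ≠ ⊤)
    (V : (Fin n → ℝ) → ℝ) (hVconc : ConcaveOn ℝ Set.univ V)
    (hVusc : UpperSemicontinuous V)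
    (h₀ : Fin n → ℝ) (hprop : U (V h₀) ≠ ⊥)
    (hlin : ∃ S : Submodule ℝ (Fin n → ℝ),
      (S : Set (Fin n → ℝ)) = {h | 0 ≤ hor (fun z => ((V z : ℝ) : EReal)) h₀ h}) :
    ∃ S : Submodule ℝ (Fin n → ℝ),
      (S : Set (Fin n → ℝ)) = {h | 0 ≤ hor (fun z => U (V z)) h₀ h} :=
  stmt14_general U hUconc hUmono hUnonconst hUne_top V hVconc h₀ hprop hlin
end

section
/- Let g : ℝ^n × ℝ^m → ℝ ∪ {-∞} be concave and upper-semicontinuous with some point (x°, y°) in the interior of its domain. Define h(x) := lim_{λ↗1} sup_{y ∈ ℝ^m} g(λ x + (1−λ) x°, y). Then h is upper-semicontinuous (it equals the upper-semicontinuous hull of x ↦ sup_y g(x, y)), and moreover h(x) = lim_{λ↗1} sup_{y ∈ ℚ^m} g(λ x + (1−λ) x°, y): the supremum over ℝ^m may be replaced by the supremum over the countable dense set ℚ^m. -/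
open MeasureTheory Filter
open scoped ENNReal

/-!
Write `φ x = ⨆ y, g (x, y)`. Concavity of `g` makes `φ` quasiconcave, so along the segment from
`x₀` to `x` it has a one-sided limit at `1`. Being finite near `(x₀, y₀)`, `g` is continuous and
hence bounded below there; since `t • x + (1 - t) • x₀ = t • x' + (1 - t) • z` with `z` near `x₀`
whenever `x'` is near `x`, concavity bounds `φ` near `x` by its values on the segment, so the limit
is the upper semicontinuous hull `limsup_{x' → x} φ x'`.

For the rational suprema: near `t = 1`, either `φ = ⊥` on the segment, or pulling a point where
`g > ⊥` towards `(x₀, y₀)` shows that the slice `g (t • x + (1 - t) • x₀, ·)` is finite on an open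
ball. A concave function is continuous on the open set where it is finite, and its supremum can be
approached from that set, so a dense set of `y` suffices.
-/

open Metric Set
open scoped Topology

lemma EReal.coe_mul_add_coe_mul_self {p : EReal} {a b : ℝ} (ha : 0 ≤ a) (hb : 0 ≤ b)
    (hab : a + b = 1) : (a : EReal) * p + (b : EReal) * p = p := by
  rw [← EReal.right_distrib_of_nonneg (by exact_mod_cast ha) (by exact_mod_cast hb),
    ← EReal.coe_add, hab, EReal.coe_one, one_mul]

lemma EReal.min_le_coe_mul_add_coe_mul {p q : EReal} {a b : ℝ} (ha : 0 ≤ a) (hb : 0 ≤ b)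
    (hab : a + b = 1) : min p q ≤ (a : EReal) * p + (b : EReal) * q := by
  rw [← EReal.coe_mul_add_coe_mul_self (p := min p q) ha hb hab]
  gcongr
  exacts [min_le_left _ _, min_le_right _ _]

lemma EReal.coe_mul_ne_bot {a : ℝ} (ha : 0 ≤ a) {x : EReal} (hx : x ≠ ⊥) :
    (a : EReal) * x ≠ ⊥ :=
  (EReal.mul_ne_bot _ _).2 ⟨.inl (EReal.coe_ne_bot a), .inr hx, .inl (EReal.coe_ne_top a),
    .inl (EReal.coe_nonneg.2 ha)⟩

lemma EReal.le_coe_div_of_coe_mul_add_lt {x : EReal} {t c b : ℝ} (ht : 0 < t)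
    (h : (t : EReal) * x + c < b) : x ≤ ((b - c) / t : ℝ) := by
  induction x with
  | bot => exact bot_le
  | coe x =>
    norm_cast at h ⊢
    rw [le_div_iff₀ ht]
    linarith
  | top => simp [EReal.coe_mul_top_of_pos ht] at h

section Quasiconcave

variable {𝕜 E F β : Type*}

lemma IsConcaveE.quasiconcaveOn [AddCommGroup E] [Module ℝ E] {f : E → EReal}
    (hf : IsConcaveE f) : QuasiconcaveOn ℝ univ f :=
  quasiconcaveOn_iff_min_le.2 ⟨convex_univ, fun x _ y _ _ _ ha hb hab =>
    (EReal.min_le_coe_mul_add_coe_mul ha hb hab).trans (hf x y _ _ ha hb hab)⟩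

lemma QuasiconcaveOn.iSup_snd [Semiring 𝕜] [PartialOrder 𝕜] [AddCommMonoid E] [AddCommMonoid F]
    [Module 𝕜 E] [Module 𝕜 F] [CompleteLinearOrder β] {g : E × F → β}
    (hg : QuasiconcaveOn 𝕜 univ g) : QuasiconcaveOn 𝕜 univ (fun x => ⨆ y, g (x, y)) := by
  refine quasiconcaveOn_iff_min_le.2 ⟨convex_univ, fun x _ x' _ a b ha hb hab => ?_⟩
  refine le_of_forall_lt fun c hc => ?_
  obtain ⟨y, hy⟩ := lt_iSup_iff.1 (lt_min_iff.1 hc).1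
  obtain ⟨y', hy'⟩ := lt_iSup_iff.1 (lt_min_iff.1 hc).2
  calc c < min (g (x, y)) (g (x', y')) := lt_min hy hy'
    _ ≤ g (a • (x, y) + b • (x', y')) :=
      (quasiconcaveOn_iff_min_le.1 hg).2 trivial trivial ha hb hab
    _ ≤ ⨆ y, g (a • x + b • x', y) := le_iSup_of_le (a • y + b • y') le_rfl

lemma QuasiconcaveOn.comp_affineMap [Ring 𝕜] [PartialOrder 𝕜] [AddCommGroup E] [AddCommGroup F]
    [Module 𝕜 E] [Module 𝕜 F] [Preorder β] {f : F → β} (hf : QuasiconcaveOn 𝕜 univ f)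
    (L : E →ᵃ[𝕜] F) : QuasiconcaveOn 𝕜 univ (f ∘ L) := fun r => by
  simpa [Set.preimage] using (hf r).affine_preimage L

lemma QuasiconcaveOn.tendsto_limsup_nhdsLT [CompleteLinearOrder β] [DenselyOrdered β]
    [TopologicalSpace β] [OrderTopology β] {f : ℝ → β} {a : ℝ}
    (hf : QuasiconcaveOn ℝ univ f) : Tendsto f (𝓝[<] a) (𝓝 (limsup f (𝓝[<] a))) := by
  refine tendsto_of_liminf_eq_limsup (le_antisymm liminf_le_limsup ?_) rfl
  refine le_of_forall_lt_imp_le_of_dense fun M hM => le_liminf_of_le (by isBoundedDefault) ?_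
  have hfreq : ∃ᶠ t in 𝓝[<] a, M < f t := frequently_lt_of_lt_limsup (by isBoundedDefault) hM
  obtain ⟨t₁, hMt₁, ht₁a⟩ := (hfreq.and_eventually self_mem_nhdsWithin).exists
  filter_upwards [Ioo_mem_nhdsLT ht₁a] with s hs
  obtain ⟨t₂, hMt₂, hst₂, ht₂a⟩ := (hfreq.and_eventually (Ioo_mem_nhdsLT hs.2)).exists
  exact ((hf M).ordConnected.out ⟨trivial, hMt₁.le⟩ ⟨trivial, hMt₂.le⟩ ⟨hs.1.le, hst₂.le⟩).2

end Quasiconcave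

section Continuity

variable {V : Type*} [NormedAddCommGroup V] [NormedSpace ℝ V] {f : V → EReal}

lemma IsConcaveE.concaveOn_toReal (hf : IsConcaveE f) {s : Set V} (hs : Convex ℝ s)
    (hbot : ∀ z ∈ s, f z ≠ ⊥) (htop : ∀ z, f z ≠ ⊤) : ConcaveOn ℝ s (fun z => (f z).toReal) := by
  refine ⟨hs, fun p hp q hq a b ha hb hab => ?_⟩
  have h := hf p q a b ha hb hab
  rw [← EReal.coe_toReal (htop p) (hbot p hp), ← EReal.coe_toReal (htop q) (hbot q hq),
    ← EReal.coe_mul, ← EReal.coe_mul, ← EReal.coe_add] at h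
  simpa only [EReal.toReal_coe, smul_eq_mul] using
    EReal.toReal_le_toReal h (EReal.coe_ne_bot _) (htop _)

lemma IsConcaveE.continuousAt [FiniteDimensional ℝ V] (hf : IsConcaveE f) (htop : ∀ z, f z ≠ ⊤)
    {c : V} (hbot : ∀ᶠ z in 𝓝 c, f z ≠ ⊥) : ContinuousAt f c := by
  obtain ⟨r, hr, hball⟩ := Metric.eventually_nhds_iff_ball.1 hbot
  have hreal : ContinuousAt (fun z => (f z).toReal) c :=
    ((hf.concaveOn_toReal (convex_ball c r) hball htop).continuousOn isOpen_ball).continuousAt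
      (ball_mem_nhds c hr)
  refine (continuous_coe_real_ereal.continuousAt.comp hreal).congr ?_
  filter_upwards [ball_mem_nhds c hr] with z hz using EReal.coe_toReal (htop z) (hball z hz)

lemma IsConcaveE.eventually_ne_bot_nhds_combo (hf : IsConcaveE f) {c w : V}
    (hc : ∀ᶠ z in 𝓝 c, f z ≠ ⊥) (hw : f w ≠ ⊥) {σ : ℝ} (hσ : 0 < σ) (hσ₁ : σ ≤ 1) :
    ∀ᶠ z in 𝓝 ((1 - σ) • w + σ • c), f z ≠ ⊥ := by
  set p := (1 - σ) • w + σ • c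
  have hlim : Tendsto (fun z => c + σ⁻¹ • (z - p)) (𝓝 p) (𝓝 c) := by
    have : Continuous (fun z => c + σ⁻¹ • (z - p)) := by fun_prop
    simpa using this.tendsto p
  filter_upwards [hlim.eventually hc] with z hz
  have hcomb : (1 - σ) • w + σ • (c + σ⁻¹ • (z - p)) = z := by
    rw [smul_add, smul_smul, mul_inv_cancel₀ hσ.ne', one_smul]
    simp only [p]
    abel
  have h := hf w (c + σ⁻¹ • (z - p)) (1 - σ) σ (by linarith) hσ.le (by ring)
  rw [hcomb] at h
  exact ne_bot_of_le_ne_bot (EReal.add_ne_bot_iff.2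
    ⟨EReal.coe_mul_ne_bot (by linarith) hw, EReal.coe_mul_ne_bot hσ.le hz⟩) h

lemma IsConcaveE.iSup_comp_eq_of_denseRange [FiniteDimensional ℝ V] (hf : IsConcaveE f)
    (htop : ∀ z, f z ≠ ⊤) {c : V} (hc : ∀ᶠ z in 𝓝 c, f z ≠ ⊥) {ι : Type*} {v : ι → V}
    (hv : DenseRange v) :
    ⨆ i, f (v i) = ⨆ w, f w := by
  refine le_antisymm (iSup_le fun i => le_iSup f (v i)) (iSup_le fun w => ?_)
  rcases eq_or_ne (f w) ⊥ with hw | hw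
  · exact hw ▸ bot_le
  refine EReal.ge_of_forall_gt_iff_ge.1 fun M hM => ?_
  obtain ⟨a, hfw⟩ : ∃ a : ℝ, f w = a := ⟨_, (EReal.coe_toReal (htop w) hw).symm⟩
  obtain ⟨b, hfc⟩ : ∃ b : ℝ, f c = b := ⟨_, (EReal.coe_toReal (htop c) hc.self_of_nhds).symm⟩
  have hMa : M < a := by exact_mod_cast hfw ▸ hM
  -- move `w` slightly towards `c`, into the open set where `f` is finite and hence continuous
  have hlim : Tendsto (fun σ : ℝ => (1 - σ) * a + σ * b) (𝓝[>] 0) (𝓝 a) := by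
    have : Continuous (fun σ : ℝ => (1 - σ) * a + σ * b) := by fun_prop
    simpa using (this.tendsto 0).mono_left nhdsWithin_le_nhds
  obtain ⟨σ, hMσ, hσ, hσ₁⟩ :=
    ((hlim.eventually (eventually_gt_nhds hMa)).and (Ioc_mem_nhdsGT zero_lt_one)).exists
  have hfp : (M : EReal) < f ((1 - σ) • w + σ • c) := calc
    (M : EReal) < ((1 - σ) * a + σ * b : ℝ) := by exact_mod_cast hMσ
    _ = ((1 - σ : ℝ) : EReal) * f w + (σ : EReal) * f c := by rw [hfw, hfc]; norm_cast
    _ ≤ f ((1 - σ) • w + σ • c) := hf w c _ _ (by linarith) hσ.le (by ring)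
  have hcont := hf.continuousAt htop (hf.eventually_ne_bot_nhds_combo hc hw hσ hσ₁)
  obtain ⟨i, hi⟩ := hv.mem_nhds (hcont.eventually (eventually_gt_nhds hfp))
  exact hi.le.trans (le_iSup (f ∘ v) i)

end Continuity

lemma upperSemicontinuous_limsup_nhds {α γ : Type*} [TopologicalSpace α] [CompleteLinearOrder γ]
    [DenselyOrdered γ] (f : α → γ) : UpperSemicontinuous (fun x => limsup f (𝓝 x)) := by
  intro x c hc
  obtain ⟨c', hxc', hc'c⟩ := exists_between hc
  filter_upwards [eventually_eventually_nhds.2 (eventually_lt_of_limsup_lt hxc')] with x' hx'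
  exact (limsup_le_of_le (by isBoundedDefault) (hx'.mono fun _ h => h.le)).trans_lt hc'c

section Marginal

variable {E F : Type*}

lemma IsConcaveE.comp_prodMk [AddCommGroup E] [Module ℝ E] [AddCommGroup F] [Module ℝ F]
    {g : E × F → EReal} (hg : IsConcaveE g) (x : E) : IsConcaveE (fun y => g (x, y)) := by
  intro y y' a b ha hb hab
  simpa [Convex.combo_self hab] using hg (x, y) (x, y') a b ha hb hab

lemma IsConcaveE.tendsto_iSup_segment_limsup [AddCommGroup E] [Module ℝ E] [AddCommGroup F]
    [Module ℝ F] {g : E × F → EReal} (hg : IsConcaveE g) (x₀ x : E) :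
    Tendsto (fun t : ℝ => ⨆ y, g (t • x + (1 - t) • x₀, y)) (𝓝[<] 1)
      (𝓝 (limsup (fun t : ℝ => ⨆ y, g (t • x + (1 - t) • x₀, y)) (𝓝[<] 1))) := by
  have hline : (fun t : ℝ => ⨆ y, g (t • x + (1 - t) • x₀, y))
      = (fun z => ⨆ y, g (z, y)) ∘ AffineMap.lineMap x₀ x := by
    ext t
    simp [AffineMap.lineMap_apply_module, add_comm]
  rw [hline]
  exact (hg.quasiconcaveOn.iSup_snd.comp_affineMap _).tendsto_limsup_nhdsLT

variable [NormedAddCommGroup E] [NormedSpace ℝ E] [NormedAddCommGroup F] [NormedSpace ℝ F]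
  {g : E × F → EReal} {x₀ : E} {y₀ : F}

lemma IsConcaveE.limsup_nhds_iSup_le_limsup_segment (hg : IsConcaveE g) {m : ℝ}
    (hm : ∀ᶠ z in 𝓝 x₀, (m : EReal) ≤ g (z, y₀)) (x : E) :
    limsup (fun z => ⨆ y, g (z, y)) (𝓝 x)
      ≤ limsup (fun t : ℝ => ⨆ y, g (t • x + (1 - t) • x₀, y)) (𝓝[<] 1) := by
  refine EReal.le_of_forall_lt_iff_le.1 fun b hb => ?_
  have hbound : Tendsto (fun t : ℝ => (((b - (1 - t) * m) / t : ℝ) : EReal)) (𝓝[<] 1) (𝓝 b) := by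
    have : ContinuousAt (fun t : ℝ => (b - (1 - t) * m) / t) 1 := by fun_prop (disch := norm_num)
    exact (continuous_coe_real_ereal.tendsto b).comp
      (by simpa using this.tendsto.mono_left nhdsWithin_le_nhds)
  refine ge_of_tendsto hbound ?_
  filter_upwards [eventually_lt_of_limsup_lt hb, Ioo_mem_nhdsLT zero_lt_one] with t hbt ht
  refine limsup_le_of_le (by isBoundedDefault) ?_
  -- `t • x' + (1 - t) • z` is the segment point `t • x + (1 - t) • x₀`, and `z → x₀` as `x' → x`
  have hz : Tendsto (fun x' => x₀ + (t / (1 - t)) • (x - x')) (𝓝 x) (𝓝 x₀) := by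
    have : Continuous (fun x' => x₀ + (t / (1 - t)) • (x - x')) := by fun_prop
    simpa using this.tendsto x
  filter_upwards [hz.eventually hm] with x' hmz
  refine iSup_le fun y => EReal.le_coe_div_of_coe_mul_add_lt ht.1 ?_
  have hpt : t • (x', y) + (1 - t) • (x₀ + (t / (1 - t)) • (x - x'), y₀)
      = (t • x + (1 - t) • x₀, t • y + (1 - t) • y₀) := by
    have : (1 - t) * (t / (1 - t)) = t := mul_div_cancel₀ t (by linarith [ht.2])
    rw [Prod.smul_mk, Prod.smul_mk, Prod.mk_add_mk, smul_add, smul_smul, this, smul_sub]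
    congr 1
    abel
  calc (t : EReal) * g (x', y) + ((1 - t) * m : ℝ)
      ≤ (t : EReal) * g (x', y)
          + ((1 - t : ℝ) : EReal) * g (x₀ + (t / (1 - t)) • (x - x'), y₀) := by
        rw [EReal.coe_mul]
        gcongr
        exact_mod_cast (sub_pos.2 ht.2).le
    _ ≤ g (t • x + (1 - t) • x₀, t • y + (1 - t) • y₀) := by
        rw [← hpt]
        exact hg _ _ _ _ ht.1.le (sub_pos.2 ht.2).le (by ring)
    _ ≤ ⨆ y, g (t • x + (1 - t) • x₀, y) := le_iSup_of_le _ le_rfl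
    _ < b := hbt

lemma IsConcaveE.limsup_segment_eq_limsup_nhds (hg : IsConcaveE g) {m : ℝ}
    (hm : ∀ᶠ z in 𝓝 x₀, (m : EReal) ≤ g (z, y₀)) (x : E) :
    limsup (fun t : ℝ => ⨆ y, g (t • x + (1 - t) • x₀, y)) (𝓝[<] 1)
      = limsup (fun z => ⨆ y, g (z, y)) (𝓝 x) := by
  refine le_antisymm ?_ (hg.limsup_nhds_iSup_le_limsup_segment hm x)
  have hseg : Tendsto (fun t : ℝ => t • x + (1 - t) • x₀) (𝓝[<] 1) (𝓝 x) := by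
    have : Continuous (fun t : ℝ => t • x + (1 - t) • x₀) := by fun_prop
    simpa using (this.tendsto 1).mono_left nhdsWithin_le_nhds
  exact hseg.limsup_comp_le_limsup (u := fun z => ⨆ y, g (z, y))

lemma IsConcaveE.eventually_iSup_denseRange_segment_eq [FiniteDimensional ℝ F]
    (hg : IsConcaveE g) (htop : ∀ p, g p ≠ ⊤) (hbot : ∀ᶠ p in 𝓝 (x₀, y₀), g p ≠ ⊥)
    {ι : Type*} {v : ι → F} (hv : DenseRange v) (x : E) :
    ∀ᶠ t in 𝓝[<] (1 : ℝ),
      ⨆ i, g (t • x + (1 - t) • x₀, v i) = ⨆ y, g (t • x + (1 - t) • x₀, y) := by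
  by_cases hfreq : ∃ᶠ t in 𝓝[<] (1 : ℝ), ⨆ y, g (t • x + (1 - t) • x₀, y) ≠ ⊥
  · filter_upwards [Ioo_mem_nhdsLT zero_lt_one] with s hs
    obtain ⟨t, ht, hst, ht₁⟩ := (hfreq.and_eventually (Ioo_mem_nhdsLT hs.2)).exists
    obtain ⟨y, hy⟩ := lt_iSup_iff.1 (bot_lt_iff_ne_bot.2 ht)
    have ht₀ : 0 < t := hs.1.trans hst
    -- the segment point at `s` lies strictly between the one at `t` and `x₀`
    set σ := 1 - s / t
    have hσ : 0 < σ := sub_pos.2 ((div_lt_one ht₀).2 hst)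
    have hσ₁ : σ ≤ 1 := sub_le_self _ (div_nonneg hs.1.le ht₀.le)
    have hpt : (1 - σ) • (t • x + (1 - t) • x₀, y) + σ • (x₀, y₀)
        = (s • x + (1 - s) • x₀, (1 - σ) • y + σ • y₀) := by
      rw [Prod.smul_mk, Prod.smul_mk, Prod.mk_add_mk]
      congr 1
      simp only [σ]
      match_scalars <;> field_simp <;> ring
    have hnear := hg.eventually_ne_bot_nhds_combo hbot hy.ne' hσ hσ₁
    rw [hpt] at hnear
    have hslice : ∀ᶠ w in 𝓝 ((1 - σ) • y + σ • y₀), g (s • x + (1 - s) • x₀, w) ≠ ⊥ :=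
      ((Continuous.prodMk_right _).tendsto _).eventually hnear
    exact (hg.comp_prodMk _).iSup_comp_eq_of_denseRange (fun _ => htop _) hslice hv
  · filter_upwards [not_frequently.1 hfreq] with t ht
    exact le_antisymm (iSup_le fun i => le_iSup_of_le (v i) le_rfl) (not_not.1 ht ▸ bot_le)

end Marginal

/-- `h` is realized as a `limsup` along `𝓝[<] 1`; the first conclusion shows that it is a
genuine limit. -/
theorem stmt15_general {n m : ℕ} (g : (Fin n → ℝ) × (Fin m → ℝ) → EReal)
    (hconc : IsConcaveE g) (hne_top : ∀ p, g p ≠ ⊤)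
    (x₀ : Fin n → ℝ) (y₀ : Fin m → ℝ)
    (hint : ∃ ε > (0 : ℝ), ∀ p : (Fin n → ℝ) × (Fin m → ℝ),
      dist p (x₀, y₀) < ε → g p ≠ ⊥) :
    (∀ x : Fin n → ℝ,
      Tendsto (fun t : ℝ => ⨆ y : Fin m → ℝ, g (t • x + (1 - t) • x₀, y))
        (nhdsWithin 1 (Set.Iio 1))
        (nhds (limsup (fun t : ℝ => ⨆ y : Fin m → ℝ, g (t • x + (1 - t) • x₀, y))
          (nhdsWithin 1 (Set.Iio 1))))) ∧
    UpperSemicontinuous (fun x : Fin n → ℝ =>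
      limsup (fun t : ℝ => ⨆ y : Fin m → ℝ, g (t • x + (1 - t) • x₀, y))
        (nhdsWithin 1 (Set.Iio 1))) ∧
    (∀ x : Fin n → ℝ,
      limsup (fun t : ℝ => ⨆ y : Fin m → ℝ, g (t • x + (1 - t) • x₀, y))
          (nhdsWithin 1 (Set.Iio 1))
        = limsup (fun t : ℝ => ⨆ q : Fin m → ℚ, g (t • x + (1 - t) • x₀, fun i => (q i : ℝ)))
          (nhdsWithin 1 (Set.Iio 1))) := by
  obtain ⟨ε, hε, hdom⟩ := hint
  have hbot : ∀ᶠ p in 𝓝 (x₀, y₀), g p ≠ ⊥ := Metric.eventually_nhds_iff.2 ⟨ε, hε, hdom⟩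
  obtain ⟨c, -, hc⟩ := EReal.exists_between_coe_real (bot_lt_iff_ne_bot.2 hbot.self_of_nhds)
  have hlow : ∀ᶠ z in 𝓝 x₀, (c : EReal) ≤ g (z, y₀) :=
    (((Continuous.prodMk_left y₀).tendsto x₀).eventually
      ((hconc.continuousAt hne_top hbot).eventually (eventually_gt_nhds hc))).mono fun _ h => h.le
  refine ⟨hconc.tendsto_iSup_segment_limsup x₀, ?_, fun x => ?_⟩
  · simp_rw [hconc.limsup_segment_eq_limsup_nhds hlow]
    exact upperSemicontinuous_limsup_nhds _
  · refine limsup_congr ?_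
    filter_upwards [hconc.eventually_iSup_denseRange_segment_eq hne_top hbot
      (v := fun q : Fin m → ℚ => fun i => (q i : ℝ))
      (DenseRange.piMap fun _ => Rat.denseRange_cast) x] with t ht using ht.symm

/-- for `g : ℝ^n × ℝ^m → ℝ ∪ {-∞}` concave, usc, with `(x°,y°)` interior
to `dom g`, the function `h(x) := lim_{λ↗1} sup_y g(λ x + (1−λ) x°, y)` (realized as a
`limsup`, which the first conclusion identifies as a genuine limit) is usc, and the
supremum over `ℝ^m` may be replaced by the supremum over `ℚ^m`. -/
theorem stmt15 {n m : ℕ} (g : (Fin n → ℝ) × (Fin m → ℝ) → EReal)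
    (hconc : IsConcaveE g) (husc : UpperSemicontinuous g) (hne_top : ∀ p, g p ≠ ⊤)
    (x₀ : Fin n → ℝ) (y₀ : Fin m → ℝ)
    (hint : ∃ ε > (0 : ℝ), ∀ p : (Fin n → ℝ) × (Fin m → ℝ),
      dist p (x₀, y₀) < ε → g p ≠ ⊥) :
    (∀ x : Fin n → ℝ,
      Tendsto (fun t : ℝ => ⨆ y : Fin m → ℝ, g (t • x + (1 - t) • x₀, y))
        (nhdsWithin 1 (Set.Iio 1))
        (nhds (limsup (fun t : ℝ => ⨆ y : Fin m → ℝ, g (t • x + (1 - t) • x₀, y))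
          (nhdsWithin 1 (Set.Iio 1))))) ∧
    UpperSemicontinuous (fun x : Fin n → ℝ =>
      limsup (fun t : ℝ => ⨆ y : Fin m → ℝ, g (t • x + (1 - t) • x₀, y))
        (nhdsWithin 1 (Set.Iio 1))) ∧
    (∀ x : Fin n → ℝ,
      limsup (fun t : ℝ => ⨆ y : Fin m → ℝ, g (t • x + (1 - t) • x₀, y))
          (nhdsWithin 1 (Set.Iio 1))
        = limsup (fun t : ℝ => ⨆ q : Fin m → ℚ, g (t • x + (1 - t) • x₀, fun i => (q i : ℝ)))
          (nhdsWithin 1 (Set.Iio 1))) :=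
  stmt15_general g hconc hne_top x₀ y₀ hint
end
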